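/- Let n ≥ 1, let R be the free ℤ-module with basis (E_ν)_{ν∈ℤ^n} and multiplication E_ν·E_{ν′} = E_{ν+ν′} if (ν_i−ν_j)(ν′_i−ν′_j) ≥ 0 for all i,j, and 0 otherwise. For σ ∈ S_n let pr_σ : R → ℤ[M_σ] be the surjective ring homomorphism with pr_σ(E_ν) = e^ν if ν ∈ M_σ = {ν : ν_{σ(1)} ≤ … ≤ ν_{σ(n)}} and 0 otherwise. Then each kernel ker(pr_σ) is a prime ideal of R, and every maximal ideal of R contains ker(pr_σ) for some σ ∈ S_n; consequently the minimal prime ideals of R are exactly the ideals ker(pr_σ). -/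

import Mathlib

/-- `ν` and `ν'` are chamber-compatible: `(ν_i - ν_j)(ν'_i - ν'_j) ≥ 0` for all `i, j`. -/
def ChamberCompat {n : ℕ} (ν ν' : Fin n → ℤ) : Prop :=
  ∀ i j, 0 ≤ (ν i - ν j) * (ν' i - ν' j)

instance {n : ℕ} (ν ν' : Fin n → ℤ) : Decidable (ChamberCompat ν ν') :=
  inferInstanceAs (Decidable (∀ i j, 0 ≤ (ν i - ν j) * (ν' i - ν' j)))

/-- The multiplication on `R = ⊕_{ν ∈ ℤ^n} ℤ·E_ν`, with `E_ν = Finsupp.single ν 1`: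
`E_ν · E_{ν'} = E_{ν+ν'}` if `ν, ν'` are chamber-compatible, and `0` otherwise. -/
noncomputable def vmul {n : ℕ} (f g : (Fin n → ℤ) →₀ ℤ) : (Fin n → ℤ) →₀ ℤ :=
  f.sum fun ν a => g.sum fun ν' b =>
    if ChamberCompat ν ν' then Finsupp.single (ν + ν') (a * b) else 0

/-- The submonoid `M_σ = {ν : ν_{σ(1)} ≤ … ≤ ν_{σ(n)}}` of `ℤ^n`. -/
def chamberMonoid {n : ℕ} (σ : Equiv.Perm (Fin n)) : AddSubmonoid (Fin n → ℤ) where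
  carrier := {ν | Monotone fun i => ν (σ i)}
  add_mem' := fun ha hb => ha.add hb
  zero_mem' := monotone_const

open scoped Classical in
/-- The chamber projection `pr_σ : R → ℤ[M_σ]`, with `pr_σ(E_ν) = e^ν` if `ν ∈ M_σ`
and `pr_σ(E_ν) = 0` otherwise. -/
noncomputable def prj {n : ℕ} (σ : Equiv.Perm (Fin n)) (f : (Fin n → ℤ) →₀ ℤ) :
    AddMonoidAlgebra ℤ (chamberMonoid σ) :=
  f.sum fun ν a =>
    if h : Monotone fun i => ν (σ i) then
      AddMonoidAlgebra.single (⟨ν, h⟩ : chamberMonoid σ) a else 0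

/-- An ideal of `R` (for the multiplication `vmul`). -/
def IsIdealR {n : ℕ} (I : Set ((Fin n → ℤ) →₀ ℤ)) : Prop :=
  (0 : (Fin n → ℤ) →₀ ℤ) ∈ I ∧
  (∀ f g, f ∈ I → g ∈ I → f + g ∈ I) ∧
  (∀ f, f ∈ I → -f ∈ I) ∧
  (∀ f g, g ∈ I → vmul f g ∈ I)

/-- A prime ideal of `R`: a proper ideal such that `fg ∈ I` implies `f ∈ I` or `g ∈ I`. -/
def IsPrimeIdealR {n : ℕ} (I : Set ((Fin n → ℤ) →₀ ℤ)) : Prop :=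
  IsIdealR I ∧ (Finsupp.single 0 1 : (Fin n → ℤ) →₀ ℤ) ∉ I ∧
  ∀ f g, vmul f g ∈ I → f ∈ I ∨ g ∈ I

/-- A maximal ideal of `R`: a proper ideal maximal among proper ideals. -/
def IsMaximalIdealR {n : ℕ} (I : Set ((Fin n → ℤ) →₀ ℤ)) : Prop :=
  IsIdealR I ∧ (Finsupp.single 0 1 : (Fin n → ℤ) →₀ ℤ) ∉ I ∧
  ∀ J : Set ((Fin n → ℤ) →₀ ℤ), IsIdealR J → I ⊆ J → J = I ∨ J = Set.univ

/-- The kernel of the chamber projection `pr_σ`. -/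
noncomputable def kerPrj {n : ℕ} (σ : Equiv.Perm (Fin n)) : Set ((Fin n → ℤ) →₀ ℤ) :=
  {f | prj σ f = 0}

/-!
Every projection `prj σ` is additive and multiplicative, and together they are injective since
every `ν` lies in some closed chamber. Hence `vmul` is a commutative ring structure, and
`kerPrj σ` is the kernel of a ring map to the domain `ℤ[M_σ]`. In a prime ideal `P`, the relation
`E_ν E_ν' = 0` for incompatible `ν, ν'` shows that `{ν | E_ν ∉ P}` is pairwise compatible; a
pairwise compatible set lies in one closed chamber `M_σ`, and then `kerPrj σ ⊆ P`, because
`kerPrj σ` is spanned by the `E_ν` with `ν ∉ M_σ`. Maximal ideals are prime. Finally `kerPrj σ`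
is a minimal prime: a weight `μ` in the interior of `M_σ` is incompatible with every `ν ∉ M_σ`,
so a prime `Q ⊆ kerPrj σ` contains `E_ν` because it does not contain `E_μ`.
-/

section

variable {n : ℕ}

theorem mem_chamberMonoid {σ : Equiv.Perm (Fin n)} {ν : Fin n → ℤ} :
    ν ∈ chamberMonoid σ ↔ Monotone fun i => ν (σ i) :=
  Iff.rfl

theorem ChamberCompat.symm {ν ν' : Fin n → ℤ} (h : ChamberCompat ν ν') : ChamberCompat ν' ν :=
  fun i j => by simpa only [mul_comm] using h i j

theorem chamberCompat_of_mem {σ : Equiv.Perm (Fin n)} {ν ν' : Fin n → ℤ}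
    (hν : ν ∈ chamberMonoid σ) (hν' : ν' ∈ chamberMonoid σ) : ChamberCompat ν ν' := by
  intro i j
  rcases le_total (σ.symm i) (σ.symm j) with h | h
  · have h1 : ν i ≤ ν j := by simpa using hν h
    have h2 : ν' i ≤ ν' j := by simpa using hν' h
    nlinarith
  · have h1 : ν j ≤ ν i := by simpa using hν h
    have h2 : ν' j ≤ ν' i := by simpa using hν' h
    nlinarith

theorem mem_chamberMonoid_of_add_mem {σ : Equiv.Perm (Fin n)} {ν ν' : Fin n → ℤ}
    (hc : ChamberCompat ν ν') (h : ν + ν' ∈ chamberMonoid σ) : ν ∈ chamberMonoid σ := by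
  intro a b hab
  have h1 := hc (σ a) (σ b)
  have h2 := h hab
  simp only [Pi.add_apply] at h2
  nlinarith

theorem exists_perm_monotone_of_total {r : Fin n → Fin n → Prop}
    (total : ∀ i j, r i j ∨ r j i) (trans : ∀ i j k, r i j → r j k → r i k) :
    ∃ σ : Equiv.Perm (Fin n), ∀ a b, a ≤ b → r (σ a) (σ b) := by
  classical
  set rank : Fin n → ℕ := fun i => (Finset.univ.filter fun k => r k i).card
  have rank_lt {i j} (hij : ¬ r i j) : rank j < rank i := by
    have hji : r j i := (total i j).resolve_left hij
    refine Finset.card_lt_card ⟨fun k hk => ?_, fun h => hij ?_⟩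
    · simp only [Finset.mem_filter, Finset.mem_univ, true_and] at hk ⊢
      exact trans _ _ _ hk hji
    · simpa using h (by simpa using (total i i).elim id id)
  refine ⟨Tuple.sort rank, fun a b hab => ?_⟩
  by_contra h
  exact (rank_lt h).not_ge (Tuple.monotone_sort rank hab)

theorem exists_forall_mem_chamberMonoid {S : Set (Fin n → ℤ)}
    (hS : ∀ ν ∈ S, ∀ ν' ∈ S, ChamberCompat ν ν') :
    ∃ σ : Equiv.Perm (Fin n), ∀ ν ∈ S, ν ∈ chamberMonoid σ := by
  have total (i j : Fin n) : (∀ ν ∈ S, ν i ≤ ν j) ∨ ∀ ν ∈ S, ν j ≤ ν i := by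
    by_contra! ⟨⟨ν, hν, h⟩, ⟨ν', hν', h'⟩⟩
    nlinarith [hS ν hν ν' hν' i j]
  obtain ⟨σ, hσ⟩ := exists_perm_monotone_of_total total
    fun i j k hij hjk ν hν => (hij ν hν).trans (hjk ν hν)
  exact ⟨σ, fun ν hν a b hab => hσ a b hab ν hν⟩

def regularWeight (σ : Equiv.Perm (Fin n)) : Fin n → ℤ := fun j => (σ.symm j : ℕ)

theorem regularWeight_mem (σ : Equiv.Perm (Fin n)) : regularWeight σ ∈ chamberMonoid σ :=
  fun a b hab => by simpa [regularWeight] using hab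

theorem not_chamberCompat_regularWeight {σ : Equiv.Perm (Fin n)} {ν : Fin n → ℤ}
    (hν : ν ∉ chamberMonoid σ) : ¬ ChamberCompat ν (regularWeight σ) := by
  intro hc
  simp only [mem_chamberMonoid, Monotone, not_forall, not_le] at hν
  obtain ⟨a, b, hab, hlt⟩ := hν
  have hab' : (a : ℤ) < b := by
    have : a ≠ b := by rintro rfl; exact hlt.ne' rfl
    exact_mod_cast lt_of_le_of_ne hab this
  have := hc (σ a) (σ b)
  simp only [regularWeight, Equiv.symm_apply_apply] at this
  nlinarith

theorem prj_eq_ofCoeff (σ : Equiv.Perm (Fin n)) (f : (Fin n → ℤ) →₀ ℤ) :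
    prj σ f = .ofCoeff (f.subtypeDomain (· ∈ chamberMonoid σ)) := by
  ext ⟨ν, hν⟩
  rw [AddMonoidAlgebra.coeff_ofCoeff, Finsupp.subtypeDomain_apply, prj,
    AddMonoidAlgebra.coeff_finsuppSum, Finsupp.sum_apply, ← Finsupp.sum_ite_self_eq' f ν]
  refine Finsupp.sum_congr fun μ _ => ?_
  by_cases hμν : μ = ν
  · subst hμν
    rw [dif_pos (mem_chamberMonoid.1 hν)]
    simp
  · split_ifs <;> simp [Subtype.ext_iff, hμν]

theorem prj_add (σ : Equiv.Perm (Fin n)) (f g : (Fin n → ℤ) →₀ ℤ) :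
    prj σ (f + g) = prj σ f + prj σ g := by
  simp only [prj_eq_ofCoeff, Finsupp.subtypeDomain_add, AddMonoidAlgebra.ofCoeff_add]

theorem prj_finsuppSum (σ : Equiv.Perm (Fin n)) {α M : Type*} [Zero M] (s : α →₀ M)
    (h : α → M → (Fin n → ℤ) →₀ ℤ) : prj σ (s.sum h) = s.sum fun a m => prj σ (h a m) := by
  simp only [prj_eq_ofCoeff, Finsupp.subtypeDomain_finsupp_sum]
  exact map_finsuppSum AddMonoidAlgebra.coeffAddEquiv.symm _ _

theorem prj_zero (σ : Equiv.Perm (Fin n)) : prj σ 0 = 0 := by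
  simp only [prj_eq_ofCoeff, Finsupp.subtypeDomain_zero, AddMonoidAlgebra.ofCoeff_zero]

theorem prj_eq_zero_iff {σ : Equiv.Perm (Fin n)} {f : (Fin n → ℤ) →₀ ℤ} :
    prj σ f = 0 ↔ ∀ ν ∈ chamberMonoid σ, f ν = 0 := by
  rw [prj_eq_ofCoeff, AddMonoidAlgebra.ofCoeff_eq_zero, Finsupp.subtypeDomain_eq_zero_iff']

theorem eq_of_forall_prj_eq {f g : (Fin n → ℤ) →₀ ℤ} (h : ∀ σ, prj σ f = prj σ g) : f = g := by
  ext ν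
  have hν : ν ∈ chamberMonoid (Tuple.sort ν) := Tuple.monotone_sort ν
  have := congrArg AddMonoidAlgebra.coeff (h (Tuple.sort ν))
  simpa [prj_eq_ofCoeff] using DFunLike.congr_fun this ⟨ν, hν⟩

theorem prj_single_of_mem {σ : Equiv.Perm (Fin n)} {ν : Fin n → ℤ} (hν : ν ∈ chamberMonoid σ)
    (a : ℤ) : prj σ (Finsupp.single ν a) = .single ⟨ν, hν⟩ a := by
  ext ⟨μ, hμ⟩
  simp [prj_eq_ofCoeff, Finsupp.single_apply, Subtype.ext_iff]

theorem prj_single_of_not_mem {σ : Equiv.Perm (Fin n)} {ν : Fin n → ℤ} (hν : ν ∉ chamberMonoid σ)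
    (a : ℤ) : prj σ (Finsupp.single ν a) = 0 :=
  prj_eq_zero_iff.2 fun μ hμ => Finsupp.single_eq_of_ne (by rintro rfl; exact hν hμ)

theorem vmul_single_single (ν ν' : Fin n → ℤ) (a b : ℤ) :
    vmul (Finsupp.single ν a) (Finsupp.single ν' b) =
      if ChamberCompat ν ν' then Finsupp.single (ν + ν') (a * b) else 0 := by
  rw [vmul, Finsupp.sum_single_index, Finsupp.sum_single_index] <;> simp

theorem prj_vmul_single_single (σ : Equiv.Perm (Fin n)) (ν ν' : Fin n → ℤ) (a b : ℤ) :
    prj σ (vmul (Finsupp.single ν a) (Finsupp.single ν' b)) =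
      prj σ (Finsupp.single ν a) * prj σ (Finsupp.single ν' b) := by
  rw [vmul_single_single]
  by_cases h : ν ∈ chamberMonoid σ ∧ ν' ∈ chamberMonoid σ
  · obtain ⟨hν, hν'⟩ := h
    rw [if_pos (chamberCompat_of_mem hν hν'), prj_single_of_mem (add_mem hν hν'),
      prj_single_of_mem hν, prj_single_of_mem hν', AddMonoidAlgebra.single_mul_single]
    rfl
  · have rhs : prj σ (Finsupp.single ν a) * prj σ (Finsupp.single ν' b) = 0 := by
      rcases not_and_or.1 h with hν | hν'
      · rw [prj_single_of_not_mem hν, zero_mul]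
      · rw [prj_single_of_not_mem hν', mul_zero]
    rw [rhs]
    split_ifs with hc
    · refine prj_single_of_not_mem (fun hm => h ⟨?_, ?_⟩) _
      · exact mem_chamberMonoid_of_add_mem hc hm
      · exact mem_chamberMonoid_of_add_mem hc.symm (add_comm ν ν' ▸ hm)
    · exact prj_zero σ

theorem prj_vmul (σ : Equiv.Perm (Fin n)) (f g : (Fin n → ℤ) →₀ ℤ) :
    prj σ (vmul f g) = prj σ f * prj σ g := by
  have expand (h : (Fin n → ℤ) →₀ ℤ) :
      prj σ h = h.sum fun ν a => prj σ (Finsupp.single ν a) := by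
    conv_lhs => rw [← Finsupp.sum_single h]
    exact prj_finsuppSum σ _ _
  have hvmul : vmul f g =
      f.sum fun ν a => g.sum fun ν' b => vmul (Finsupp.single ν a) (Finsupp.single ν' b) := by
    simp only [vmul_single_single]
    rfl
  rw [hvmul, expand f, expand g, Finsupp.sum_mul, prj_finsuppSum]
  refine Finsupp.sum_congr fun ν _ => ?_
  rw [Finsupp.mul_sum, prj_finsuppSum]
  exact Finsupp.sum_congr fun ν' _ => prj_vmul_single_single σ ν ν' _ _

instance (σ : Equiv.Perm (Fin n)) : UniqueSums (chamberMonoid σ) :=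
  UniqueSums.of_injective_addHom (chamberMonoid σ).subtype.toAddHom Subtype.coe_injective
    inferInstance

instance (σ : Equiv.Perm (Fin n)) : IsDomain (AddMonoidAlgebra ℤ (chamberMonoid σ)) :=
  NoZeroDivisors.to_isDomain _

/-- A type synonym, so that `vmul` rather than the pointwise product of `Finsupp` is the
multiplication. -/
def ChamberRing (n : ℕ) : Type := (Fin n → ℤ) →₀ ℤ

namespace ChamberRing

noncomputable instance : AddCommGroup (ChamberRing n) :=
  inferInstanceAs (AddCommGroup ((Fin n → ℤ) →₀ ℤ))

noncomputable instance : Mul (ChamberRing n) := ⟨vmul⟩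

noncomputable instance : One (ChamberRing n) := ⟨Finsupp.single 0 1⟩

noncomputable def prjAddHom (σ : Equiv.Perm (Fin n)) :
    ChamberRing n →+ AddMonoidAlgebra ℤ (chamberMonoid σ) where
  toFun := prj σ
  map_zero' := prj_zero σ
  map_add' := prj_add σ

theorem prjAddHom_mul (σ : Equiv.Perm (Fin n)) (f g : ChamberRing n) :
    prjAddHom σ (f * g) = prjAddHom σ f * prjAddHom σ g :=
  prj_vmul σ f g

theorem prjAddHom_one (σ : Equiv.Perm (Fin n)) : prjAddHom σ (1 : ChamberRing n) = 1 :=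
  prj_single_of_mem (zero_mem _) 1

theorem ext_prjAddHom {f g : ChamberRing n} (h : ∀ σ, prjAddHom σ f = prjAddHom σ g) : f = g :=
  eq_of_forall_prj_eq h

noncomputable instance : CommRing (ChamberRing n) where
  mul_assoc f g h := ext_prjAddHom fun σ => by simp only [prjAddHom_mul, mul_assoc]
  one_mul f := ext_prjAddHom fun σ => by rw [prjAddHom_mul, prjAddHom_one, one_mul]
  mul_one f := ext_prjAddHom fun σ => by rw [prjAddHom_mul, prjAddHom_one, mul_one]
  zero_mul f := ext_prjAddHom fun σ => by rw [prjAddHom_mul, map_zero, zero_mul]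
  mul_zero f := ext_prjAddHom fun σ => by rw [prjAddHom_mul, map_zero, mul_zero]
  left_distrib f g h := ext_prjAddHom fun σ => by simp only [prjAddHom_mul, map_add, mul_add]
  right_distrib f g h := ext_prjAddHom fun σ => by simp only [prjAddHom_mul, map_add, add_mul]
  mul_comm f g := ext_prjAddHom fun σ => by rw [prjAddHom_mul, prjAddHom_mul, mul_comm]

noncomputable def prjRingHom (σ : Equiv.Perm (Fin n)) :
    ChamberRing n →+* AddMonoidAlgebra ℤ (chamberMonoid σ) :=
  { prjAddHom σ with
    map_one' := prjAddHom_one σ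
    map_mul' := prjAddHom_mul σ }

noncomputable def monomial (ν : Fin n → ℤ) (a : ℤ) : ChamberRing n := Finsupp.single ν a

theorem monomial_mul_monomial_of_not_chamberCompat {ν ν' : Fin n → ℤ}
    (h : ¬ ChamberCompat ν ν') (a b : ℤ) : monomial ν a * monomial ν' b = 0 :=
  (vmul_single_single ν ν' a b).trans (if_neg h)

theorem monomial_eq_mul_monomial_one (ν : Fin n → ℤ) (a : ℤ) :
    monomial ν a = monomial 0 a * monomial ν 1 := by
  have h := vmul_single_single 0 ν a 1
  rw [if_pos (show ChamberCompat 0 ν from fun i j => by simp), zero_add, mul_one] at h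
  exact h.symm

theorem kerPrj_subset_iff {σ : Equiv.Perm (Fin n)} {I : Ideal (ChamberRing n)} :
    kerPrj σ ⊆ (I : Set (ChamberRing n)) ↔ ∀ ν ∉ chamberMonoid σ, monomial ν 1 ∈ I := by
  refine ⟨fun h ν hν => h (prj_single_of_not_mem hν 1), fun h f hf => ?_⟩
  rw [← Finsupp.sum_single f]
  refine I.sum_mem fun ν hν => ?_
  change monomial ν (f ν) ∈ I
  have hν' : ν ∉ chamberMonoid σ := fun hm =>
    Finsupp.mem_support_iff.1 hν (prj_eq_zero_iff.1 hf ν hm)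
  rw [monomial_eq_mul_monomial_one]
  exact I.mul_mem_left _ (h ν hν')

theorem exists_kerPrj_subset_of_isPrime {P : Ideal (ChamberRing n)} (hP : P.IsPrime) :
    ∃ σ : Equiv.Perm (Fin n), kerPrj σ ⊆ (P : Set (ChamberRing n)) := by
  have hcompat : ∀ ν ∈ {ν | monomial ν 1 ∉ P}, ∀ ν' ∈ {ν | monomial ν 1 ∉ P},
      ChamberCompat ν ν' := fun ν hν ν' hν' => by
    by_contra hc
    have := monomial_mul_monomial_of_not_chamberCompat hc 1 1 ▸ P.zero_mem
    exact (hP.mem_or_mem this).elim hν hν'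
  obtain ⟨σ, hσ⟩ := exists_forall_mem_chamberMonoid hcompat
  exact ⟨σ, kerPrj_subset_iff.2 fun ν hν => not_not.1 fun h => hν (hσ ν h)⟩

theorem kerPrj_subset_of_isPrime {σ : Equiv.Perm (Fin n)} {Q : Ideal (ChamberRing n)}
    (hQ : Q.IsPrime) (hQσ : (Q : Set (ChamberRing n)) ⊆ kerPrj σ) :
    kerPrj σ ⊆ (Q : Set (ChamberRing n)) := by
  have hreg : monomial (regularWeight σ) 1 ∉ Q := fun h => by
    simpa [monomial] using prj_eq_zero_iff.1 (hQσ h) _ (regularWeight_mem σ)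
  refine kerPrj_subset_iff.2 fun ν hν => ?_
  have := monomial_mul_monomial_of_not_chamberCompat
    (not_chamberCompat_regularWeight hν) 1 1 ▸ Q.zero_mem
  exact (hQ.mem_or_mem this).resolve_right hreg

end ChamberRing

open ChamberRing

def IsIdealR.toIdeal {I : Set ((Fin n → ℤ) →₀ ℤ)} (hI : IsIdealR I) : Ideal (ChamberRing n) where
  carrier := I
  zero_mem' := hI.1
  add_mem' := hI.2.1 _ _
  smul_mem' := hI.2.2.2

theorem isIdealR_coe (J : Ideal (ChamberRing n)) : IsIdealR (J : Set (ChamberRing n)) :=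
  ⟨J.zero_mem, fun _ _ => J.add_mem, fun _ => J.neg_mem, J.mul_mem_left⟩

theorem isPrimeIdealR_iff {P : Set ((Fin n → ℤ) →₀ ℤ)} :
    IsPrimeIdealR P ↔ ∃ J : Ideal (ChamberRing n), J.IsPrime ∧ (J : Set (ChamberRing n)) = P := by
  constructor
  · rintro ⟨hP, hone, hmul⟩
    exact ⟨hP.toIdeal, Ideal.isPrime_iff.2 ⟨(Ideal.ne_top_iff_one _).2 hone, hmul _ _⟩, rfl⟩
  · rintro ⟨J, hJ, rfl⟩
    exact ⟨isIdealR_coe J, (Ideal.ne_top_iff_one J).1 hJ.ne_top, fun _ _ => hJ.mem_or_mem⟩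

theorem IsMaximalIdealR.isMaximal_toIdeal {M : Set ((Fin n → ℤ) →₀ ℤ)} (hM : IsMaximalIdealR M) :
    hM.1.toIdeal.IsMaximal := by
  refine Ideal.isMaximal_iff.2 ⟨hM.2.1, fun J x hle hx hxJ => ?_⟩
  rcases hM.2.2 (J : Set (ChamberRing n)) (isIdealR_coe J) hle with hJ | hJ
  · exact absurd (hJ ▸ hxJ) hx
  · exact Set.eq_univ_iff_forall.1 hJ (1 : ChamberRing n)

theorem IsMaximalIdealR.isPrimeIdealR {M : Set ((Fin n → ℤ) →₀ ℤ)} (hM : IsMaximalIdealR M) :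
    IsPrimeIdealR M :=
  isPrimeIdealR_iff.2 ⟨_, hM.isMaximal_toIdeal.isPrime, rfl⟩

theorem isPrimeIdealR_kerPrj (σ : Equiv.Perm (Fin n)) : IsPrimeIdealR (kerPrj σ) :=
  isPrimeIdealR_iff.2 ⟨_, RingHom.ker_isPrime (prjRingHom σ), rfl⟩

theorem IsPrimeIdealR.exists_kerPrj_subset {P : Set ((Fin n → ℤ) →₀ ℤ)} (hP : IsPrimeIdealR P) :
    ∃ σ : Equiv.Perm (Fin n), kerPrj σ ⊆ P := by
  obtain ⟨J, hJ, rfl⟩ := isPrimeIdealR_iff.1 hP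
  exact exists_kerPrj_subset_of_isPrime hJ

theorem IsPrimeIdealR.kerPrj_subset {σ : Equiv.Perm (Fin n)} {Q : Set ((Fin n → ℤ) →₀ ℤ)}
    (hQ : IsPrimeIdealR Q) (hQσ : Q ⊆ kerPrj σ) : kerPrj σ ⊆ Q := by
  obtain ⟨J, hJ, rfl⟩ := isPrimeIdealR_iff.1 hQ
  exact kerPrj_subset_of_isPrime hJ hQσ

end

theorem stmt6_general (n : ℕ) :
    (∀ σ : Equiv.Perm (Fin n), IsPrimeIdealR (kerPrj σ)) ∧
    (∀ I : Set ((Fin n → ℤ) →₀ ℤ), IsMaximalIdealR I →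
      ∃ σ : Equiv.Perm (Fin n), kerPrj σ ⊆ I) ∧
    (∀ P : Set ((Fin n → ℤ) →₀ ℤ),
      (IsPrimeIdealR P ∧ ∀ Q : Set ((Fin n → ℤ) →₀ ℤ), IsPrimeIdealR Q → Q ⊆ P → Q = P) ↔
      ∃ σ : Equiv.Perm (Fin n), P = kerPrj σ) := by
  refine ⟨isPrimeIdealR_kerPrj, fun I hI => hI.isPrimeIdealR.exists_kerPrj_subset,
    fun P => ⟨fun ⟨hP, hmin⟩ => ?_, ?_⟩⟩
  · obtain ⟨σ, hσ⟩ := hP.exists_kerPrj_subset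
    exact ⟨σ, (hmin _ (isPrimeIdealR_kerPrj σ) hσ).symm⟩
  · rintro ⟨σ, rfl⟩
    exact ⟨isPrimeIdealR_kerPrj σ, fun Q hQ hQσ => hQσ.antisymm (hQ.kerPrj_subset hQσ)⟩

theorem stmt6 (n : ℕ) (hn : 1 ≤ n) :
    (∀ σ : Equiv.Perm (Fin n), IsPrimeIdealR (kerPrj σ)) ∧
    (∀ I : Set ((Fin n → ℤ) →₀ ℤ), IsMaximalIdealR I →
      ∃ σ : Equiv.Perm (Fin n), kerPrj σ ⊆ I) ∧
    (∀ P : Set ((Fin n → ℤ) →₀ ℤ),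
      (IsPrimeIdealR P ∧ ∀ Q : Set ((Fin n → ℤ) →₀ ℤ), IsPrimeIdealR Q → Q ⊆ P → Q = P) ↔
      ∃ σ : Equiv.Perm (Fin n), P = kerPrj σ) :=
  stmt6_general n
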